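/- If the ν_j are independent over ℤ, then the kernel of D = Σ_j ν_j (q_j ∂/∂η_j − η_j ∂/∂q_j) acting on polynomials in (q,η) is exactly the subalgebra spanned by the monomials P_m = Π_j (η_j² + q_j²)^{m_j} over all multi-indices m of nonnegative integers; in particular ker D contains no nonzero polynomial of odd degree. -/

import Mathlib

open MvPolynomial

/-- `D = Σ_j ν_j (q_j ∂/∂η_j − η_j ∂/∂q_j)` as a linear endomorphism of the polynomial
ring in the `2n` variables `(q, η)` (`Sum.inl j ↦ q_j`, `Sum.inr j ↦ η_j`). -/
noncomputable def Dlin {n : ℕ} (ν : Fin n → ℝ) :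
    MvPolynomial (Fin n ⊕ Fin n) ℝ →ₗ[ℝ] MvPolynomial (Fin n ⊕ Fin n) ℝ :=
  ∑ j : Fin n, ν j •
    ((LinearMap.mulLeft ℝ (X (Sum.inl j))).comp (pderiv (Sum.inr j)).toLinearMap
      - (LinearMap.mulLeft ℝ (X (Sum.inr j))).comp (pderiv (Sum.inl j)).toLinearMap)

namespace Stmt5Aux

variable {n : ℕ}

/-- The complexified operator `D`. -/
noncomputable def DC (ν : Fin n → ℝ) :
    MvPolynomial (Fin n ⊕ Fin n) ℂ →ₗ[ℂ] MvPolynomial (Fin n ⊕ Fin n) ℂ :=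
  ∑ j : Fin n, ((ν j : ℂ)) •
    ((LinearMap.mulLeft ℂ (X (Sum.inl j))).comp (pderiv (Sum.inr j)).toLinearMap
      - (LinearMap.mulLeft ℂ (X (Sum.inr j))).comp (pderiv (Sum.inl j)).toLinearMap)

/-- The diagonal operator `E = Σ_j i ν_j (u_j ∂/∂u_j − v_j ∂/∂v_j)`. -/
noncomputable def EC (ν : Fin n → ℝ) :
    MvPolynomial (Fin n ⊕ Fin n) ℂ →ₗ[ℂ] MvPolynomial (Fin n ⊕ Fin n) ℂ :=
  ∑ j : Fin n, ((ν j : ℂ) * Complex.I) •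
    ((LinearMap.mulLeft ℂ (X (Sum.inl j))).comp (pderiv (Sum.inl j)).toLinearMap
      - (LinearMap.mulLeft ℂ (X (Sum.inr j))).comp (pderiv (Sum.inr j)).toLinearMap)

lemma Dlin_apply (ν : Fin n → ℝ) (p : MvPolynomial (Fin n ⊕ Fin n) ℝ) :
    Dlin ν p = ∑ j : Fin n, C (ν j) *
      (X (Sum.inl j) * pderiv (Sum.inr j) p - X (Sum.inr j) * pderiv (Sum.inl j) p) := by
  simp [Dlin, LinearMap.sum_apply, smul_eq_C_mul]

lemma DC_apply (ν : Fin n → ℝ) (p : MvPolynomial (Fin n ⊕ Fin n) ℂ) :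
    DC ν p = ∑ j : Fin n, C ((ν j : ℂ)) *
      (X (Sum.inl j) * pderiv (Sum.inr j) p - X (Sum.inr j) * pderiv (Sum.inl j) p) := by
  simp [DC, LinearMap.sum_apply, smul_eq_C_mul]

lemma EC_apply (ν : Fin n → ℝ) (p : MvPolynomial (Fin n ⊕ Fin n) ℂ) :
    EC ν p = ∑ j : Fin n, C ((ν j : ℂ) * Complex.I) *
      (X (Sum.inl j) * pderiv (Sum.inl j) p - X (Sum.inr j) * pderiv (Sum.inr j) p) := by
  simp [EC, LinearMap.sum_apply, smul_eq_C_mul]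

lemma DC_mul (ν : Fin n → ℝ) (p q : MvPolynomial (Fin n ⊕ Fin n) ℂ) :
    DC ν (p * q) = DC ν p * q + p * DC ν q := by
  simp only [DC_apply, pderiv_mul]
  rw [Finset.sum_mul, Finset.mul_sum, ← Finset.sum_add_distrib]
  refine Finset.sum_congr rfl fun j _ => by ring

lemma EC_mul (ν : Fin n → ℝ) (p q : MvPolynomial (Fin n ⊕ Fin n) ℂ) :
    EC ν (p * q) = EC ν p * q + p * EC ν q := by
  simp only [EC_apply, pderiv_mul]
  rw [Finset.sum_mul, Finset.mul_sum, ← Finset.sum_add_distrib]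
  refine Finset.sum_congr rfl fun j _ => by ring

lemma DC_C (ν : Fin n → ℝ) (a : ℂ) : DC ν (C a) = 0 := by
  simp [DC_apply]

lemma EC_C (ν : Fin n → ℝ) (a : ℂ) : EC ν (C a) = 0 := by
  simp [EC_apply]

/-- Change of variables `q_j ↦ u_j = q_j + i η_j`, `η_j ↦ v_j = q_j - i η_j`. -/
noncomputable def Tmap (n : ℕ) :
    MvPolynomial (Fin n ⊕ Fin n) ℂ →ₐ[ℂ] MvPolynomial (Fin n ⊕ Fin n) ℂ :=
  aeval (Sum.elim (fun j => X (Sum.inl j) + Complex.I • X (Sum.inr j))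
    (fun j => X (Sum.inl j) - Complex.I • X (Sum.inr j)))

/-- Inverse change of variables. -/
noncomputable def Smap (n : ℕ) :
    MvPolynomial (Fin n ⊕ Fin n) ℂ →ₐ[ℂ] MvPolynomial (Fin n ⊕ Fin n) ℂ :=
  aeval (Sum.elim (fun j => (1/2 : ℂ) • (X (Sum.inl j) + X (Sum.inr j)))
    (fun j => (-Complex.I/2 : ℂ) • (X (Sum.inl j) - X (Sum.inr j))))

lemma Tmap_Smap (p : MvPolynomial (Fin n ⊕ Fin n) ℂ) : Tmap n (Smap n p) = p := by
  have h : (Tmap n).comp (Smap n) = AlgHom.id ℂ _ := by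
    apply MvPolynomial.algHom_ext
    rintro (j | j) <;>
      · simp only [AlgHom.comp_apply, AlgHom.id_apply, Smap, Tmap, aeval_X, Sum.elim_inl,
          Sum.elim_inr, map_smul, map_add, map_sub]
        match_scalars <;> simp [Complex.ext_iff] <;> ring
  calc Tmap n (Smap n p) = ((Tmap n).comp (Smap n)) p := rfl
  _ = p := by rw [h]; rfl

lemma Smap_Tmap (p : MvPolynomial (Fin n ⊕ Fin n) ℂ) : Smap n (Tmap n p) = p := by
  have h : (Smap n).comp (Tmap n) = AlgHom.id ℂ _ := by
    apply MvPolynomial.algHom_ext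
    rintro (j | j) <;>
      · simp only [AlgHom.comp_apply, AlgHom.id_apply, Smap, Tmap, aeval_X, Sum.elim_inl,
          Sum.elim_inr, map_smul, map_add, map_sub]
        match_scalars <;> simp [Complex.ext_iff] <;> ring
  calc Smap n (Tmap n p) = ((Smap n).comp (Tmap n)) p := rfl
  _ = p := by rw [h]; rfl

lemma Tmap_injective : Function.Injective (Tmap n) :=
  Function.LeftInverse.injective Smap_Tmap

lemma DC_X_inl (ν : Fin n → ℝ) (j : Fin n) :
    DC ν (X (Sum.inl j)) = -((ν j : ℂ) • X (Sum.inr j)) := by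
  rw [DC_apply, Finset.sum_eq_single j]
  · rw [pderiv_X_self, pderiv_X_of_ne (by simp), smul_eq_C_mul]; ring
  · intro b _ hb
    rw [pderiv_X_of_ne (by simp), pderiv_X_of_ne (by simpa using Ne.symm hb)]; ring
  · simp

lemma DC_X_inr (ν : Fin n → ℝ) (j : Fin n) :
    DC ν (X (Sum.inr j)) = (ν j : ℂ) • X (Sum.inl j) := by
  rw [DC_apply, Finset.sum_eq_single j]
  · rw [pderiv_X_self, pderiv_X_of_ne (by simp), smul_eq_C_mul]; ring
  · intro b _ hb
    rw [pderiv_X_of_ne (by simpa using Ne.symm hb), pderiv_X_of_ne (by simp)]; ring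
  · simp

lemma EC_X_inl (ν : Fin n → ℝ) (j : Fin n) :
    EC ν (X (Sum.inl j)) = ((ν j : ℂ) * Complex.I) • X (Sum.inl j) := by
  rw [EC_apply, Finset.sum_eq_single j]
  · rw [pderiv_X_self, pderiv_X_of_ne (by simp), smul_eq_C_mul]; ring
  · intro b _ hb
    rw [pderiv_X_of_ne (by simpa using Ne.symm hb), pderiv_X_of_ne (by simp)]; ring
  · simp

lemma EC_X_inr (ν : Fin n → ℝ) (j : Fin n) :
    EC ν (X (Sum.inr j)) = -(((ν j : ℂ) * Complex.I) • X (Sum.inr j)) := by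
  rw [EC_apply, Finset.sum_eq_single j]
  · rw [pderiv_X_self, pderiv_X_of_ne (by simp), smul_eq_C_mul]; ring
  · intro b _ hb
    rw [pderiv_X_of_ne (by simp), pderiv_X_of_ne (by simpa using Ne.symm hb)]; ring
  · simp

lemma key_gen (ν : Fin n → ℝ) (i : Fin n ⊕ Fin n) :
    DC ν (Tmap n (X i)) = Tmap n (EC ν (X i)) := by
  cases i with
  | inl j =>
    rw [EC_X_inl, map_smul]
    simp only [Tmap, aeval_X, Sum.elim_inl]
    rw [map_add, map_smul, DC_X_inl, DC_X_inr]
    match_scalars <;> simp [Complex.ext_iff] <;> ring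
  | inr j =>
    rw [EC_X_inr, map_neg, map_smul]
    simp only [Tmap, aeval_X, Sum.elim_inr]
    rw [map_sub, map_smul, DC_X_inl, DC_X_inr]
    match_scalars <;> simp [Complex.ext_iff] <;> ring

/-- Conjugation: `DC ∘ T = T ∘ EC`. -/
lemma DC_Tmap (ν : Fin n → ℝ) (p : MvPolynomial (Fin n ⊕ Fin n) ℂ) :
    DC ν (Tmap n p) = Tmap n (EC ν p) := by
  induction p using MvPolynomial.induction_on with
  | C a =>
    rw [show (Tmap n) (C a) = C a from by simp [Tmap, algebraMap_eq], DC_C, EC_C, map_zero]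
  | add p q hp hq => simp only [map_add, hp, hq]
  | mul_X p i hp =>
    rw [map_mul, DC_mul, hp, EC_mul, map_add, map_mul, map_mul, key_gen]

/-- `map (algebraMap ℝ ℂ)` intertwines `Dlin` and `DC`. -/
lemma mapC_Dlin (ν : Fin n → ℝ) (p : MvPolynomial (Fin n ⊕ Fin n) ℝ) :
    map (algebraMap ℝ ℂ) (Dlin ν p) = DC ν (map (algebraMap ℝ ℂ) p) := by
  rw [Dlin_apply, DC_apply, map_sum]
  refine Finset.sum_congr rfl fun j _ => ?_
  rw [map_mul, map_sub, map_mul, map_mul, map_C, map_X, map_X, pderiv_map, pderiv_map]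
  norm_num

/-- The eigenvalue of `EC` on the monomial with exponents `s`. -/
noncomputable def lam (ν : Fin n → ℝ) (s : (Fin n ⊕ Fin n) →₀ ℕ) : ℂ :=
  (∑ j, (ν j : ℂ) * ((s (Sum.inl j) : ℂ) - (s (Sum.inr j) : ℂ))) * Complex.I

lemma X_mul_pderiv_self (i : Fin n ⊕ Fin n) (s : (Fin n ⊕ Fin n) →₀ ℕ) (c : ℂ) :
    X i * pderiv i (monomial s c) = (s i : ℂ) • monomial s c := by
  rw [pderiv_monomial, smul_monomial]
  by_cases h : s i = 0
  · simp [h]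
  · rw [show (X i : MvPolynomial (Fin n ⊕ Fin n) ℂ)
        * monomial (s - Finsupp.single i 1) (c * (s i : ℂ))
      = X i ^ 1 * monomial (s - Finsupp.single i 1) (c * (s i : ℂ)) from by rw [pow_one],
      ← monomial_single_add]
    have hst : Finsupp.single i 1 + (s - Finsupp.single i 1) = s := by
      ext v
      simp only [Finsupp.add_apply, Finsupp.tsub_apply, Finsupp.single_apply]
      have hs1 : 1 ≤ s i := Nat.one_le_iff_ne_zero.mpr h
      split_ifs with h1
      · subst h1; omega
      · omega
    rw [hst, smul_eq_mul, mul_comm]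

lemma EC_monomial (ν : Fin n → ℝ) (s : (Fin n ⊕ Fin n) →₀ ℕ) (c : ℂ) :
    EC ν (monomial s c) = lam ν s • monomial s c := by
  rw [EC_apply]
  rw [show lam ν s • (monomial s c : MvPolynomial (Fin n ⊕ Fin n) ℂ)
      = ∑ j, ((ν j : ℂ) * Complex.I * ((s (Sum.inl j) : ℂ) - (s (Sum.inr j) : ℂ)))
          • monomial s c from by
    rw [← Finset.sum_smul, lam, Finset.sum_mul]
    congr 1
    exact Finset.sum_congr rfl fun j _ => by ring]
  refine Finset.sum_congr rfl fun j _ => ?_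
  rw [X_mul_pderiv_self, X_mul_pderiv_self]
  simp only [smul_eq_C_mul, map_mul, map_sub]
  ring

lemma coeff_EC (ν : Fin n → ℝ) (p : MvPolynomial (Fin n ⊕ Fin n) ℂ)
    (t : (Fin n ⊕ Fin n) →₀ ℕ) :
    coeff t (EC ν p) = lam ν t * coeff t p := by
  classical
  conv_lhs => rw [p.as_sum]
  rw [map_sum, show ∑ s ∈ p.support, EC ν (monomial s (coeff s p))
      = ∑ s ∈ p.support, lam ν s • monomial s (coeff s p) from
    Finset.sum_congr rfl fun s _ => EC_monomial ν s _]
  rw [coeff_sum]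
  simp only [coeff_smul, coeff_monomial, smul_eq_mul, mul_ite, mul_zero]
  rw [Finset.sum_ite_eq' p.support t fun s => lam ν s * coeff s p]
  by_cases h : t ∈ p.support
  · rw [if_pos h]
  · rw [if_neg h, notMem_support_iff.mp h, mul_zero]

lemma EC_ker_balanced (ν : Fin n → ℝ)
    (hindep : ∀ γ : Fin n → ℤ, (∑ j, (γ j : ℝ) * ν j) = 0 → ∀ j, γ j = 0)
    (p : MvPolynomial (Fin n ⊕ Fin n) ℂ) (h : EC ν p = 0)
    (t : (Fin n ⊕ Fin n) →₀ ℕ) (ht : t ∈ p.support) (j : Fin n) :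
    t (Sum.inl j) = t (Sum.inr j) := by
  have h1 : lam ν t * coeff t p = 0 := by rw [← coeff_EC, h, coeff_zero]
  have h2 : coeff t p ≠ 0 := mem_support_iff.mp ht
  have h3 : lam ν t = 0 := by
    rcases mul_eq_zero.mp h1 with h' | h'
    · exact h'
    · exact absurd h' h2
  rw [lam] at h3
  have h4 : (∑ j, (ν j : ℂ) * ((t (Sum.inl j) : ℂ) - (t (Sum.inr j) : ℂ))) = 0 := by
    rcases mul_eq_zero.mp h3 with h' | h'
    · exact h'
    · exact absurd h' Complex.I_ne_zero
  have h5 : (∑ j, ((t (Sum.inl j) : ℝ) - (t (Sum.inr j) : ℝ)) * ν j) = 0 := by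
    have hc : ((∑ j, ((t (Sum.inl j) : ℝ) - (t (Sum.inr j) : ℝ)) * ν j : ℝ) : ℂ)
        = ∑ j, (ν j : ℂ) * ((t (Sum.inl j) : ℂ) - (t (Sum.inr j) : ℂ)) := by
      push_cast
      exact Finset.sum_congr rfl fun j _ => by ring
    have h' := hc.trans h4
    exact_mod_cast h'
  have h6 : (t (Sum.inl j) : ℤ) - (t (Sum.inr j) : ℤ) = 0 := by
    refine hindep (fun j => (t (Sum.inl j) : ℤ) - (t (Sum.inr j) : ℤ)) ?_ j
    push_cast
    exact_mod_cast h5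
  omega

/-- The generating real polynomials `P_m`. -/
noncomputable def Pm (m : Fin n → ℕ) : MvPolynomial (Fin n ⊕ Fin n) ℝ :=
  ∏ j : Fin n, (X (Sum.inr j) ^ 2 + X (Sum.inl j) ^ 2) ^ m j

lemma uv_eq (j : Fin n) :
    ((X (Sum.inl j) + Complex.I • X (Sum.inr j)) *
      (X (Sum.inl j) - Complex.I • X (Sum.inr j)) : MvPolynomial (Fin n ⊕ Fin n) ℂ)
    = X (Sum.inr j) ^ 2 + X (Sum.inl j) ^ 2 := by
  rw [smul_eq_C_mul]
  have hI : (C Complex.I : MvPolynomial (Fin n ⊕ Fin n) ℂ) * C Complex.I = -1 := by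
    rw [← C_mul, Complex.I_mul_I, map_neg, map_one]
  linear_combination (-(X (Sum.inr j) : MvPolynomial (Fin n ⊕ Fin n) ℂ) ^ 2) * hI

lemma Tmap_monomial_balanced (s : (Fin n ⊕ Fin n) →₀ ℕ)
    (hs : ∀ j, s (Sum.inl j) = s (Sum.inr j)) :
    Tmap n (monomial s 1) = map (algebraMap ℝ ℂ) (Pm fun j => s (Sum.inl j)) := by
  rw [Tmap, aeval_monomial, map_one, one_mul]
  rw [Finsupp.prod_fintype _ _ fun i => pow_zero _]
  rw [Fintype.prod_sum_type]
  simp only [Sum.elim_inl, Sum.elim_inr]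
  rw [← Finset.prod_mul_distrib, Pm, map_prod]
  refine Finset.prod_congr rfl fun j _ => ?_
  rw [map_pow, map_add, map_pow, map_pow, map_X, map_X, ← hs j, ← mul_pow, uv_eq]

lemma lam_balanced (ν : Fin n → ℝ) (s : (Fin n ⊕ Fin n) →₀ ℕ)
    (hs : ∀ j, s (Sum.inl j) = s (Sum.inr j)) : lam ν s = 0 := by
  rw [lam]
  have : ∀ j ∈ Finset.univ, (ν j : ℂ) * ((s (Sum.inl j) : ℂ) - (s (Sum.inr j) : ℂ)) = 0 :=
    fun j _ => by rw [hs j, sub_self, mul_zero]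
  rw [Finset.sum_congr rfl this, Finset.sum_const_zero, zero_mul]

/-- The canonical balanced exponent function for `m`. -/
noncomputable def sm (m : Fin n → ℕ) : (Fin n ⊕ Fin n) →₀ ℕ :=
  Finsupp.equivFunOnFinite.symm (Sum.elim m m)

lemma sm_inl (m : Fin n → ℕ) (j : Fin n) : sm m (Sum.inl j) = m j := rfl

lemma sm_inr (m : Fin n → ℕ) (j : Fin n) : sm m (Sum.inr j) = m j := rfl

lemma algebraMapRC_injective :
    Function.Injective (map (algebraMap ℝ ℂ) :
      MvPolynomial (Fin n ⊕ Fin n) ℝ → MvPolynomial (Fin n ⊕ Fin n) ℂ) :=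
  MvPolynomial.map_injective _ (algebraMap ℝ ℂ).injective

lemma Dlin_Pm (ν : Fin n → ℝ) (m : Fin n → ℕ) : Dlin ν (Pm m) = 0 := by
  apply algebraMapRC_injective
  rw [mapC_Dlin, map_zero]
  have hbal : ∀ j, sm m (Sum.inl j) = sm m (Sum.inr j) := fun j => rfl
  have h1 : map (algebraMap ℝ ℂ) (Pm m) = Tmap n (monomial (sm m) 1) := by
    rw [Tmap_monomial_balanced (sm m) hbal]
    rfl
  rw [h1, DC_Tmap, EC_monomial, lam_balanced ν _ hbal, zero_smul, map_zero]

/-- Real part of a complex polynomial, coefficientwise. -/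
noncomputable def reP (p : MvPolynomial (Fin n ⊕ Fin n) ℂ) :
    MvPolynomial (Fin n ⊕ Fin n) ℝ :=
  AddMonoidAlgebra.ofCoeff (Finsupp.mapRange Complex.re Complex.zero_re (AddMonoidAlgebra.coeff p))

lemma coeff_reP (t : (Fin n ⊕ Fin n) →₀ ℕ) (p : MvPolynomial (Fin n ⊕ Fin n) ℂ) :
    coeff t (reP p) = (coeff t p).re :=
  rfl

lemma reP_add (p q : MvPolynomial (Fin n ⊕ Fin n) ℂ) : reP (p + q) = reP p + reP q := by
  apply MvPolynomial.ext
  intro t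
  rw [coeff_add, coeff_reP, coeff_reP, coeff_reP, coeff_add, Complex.add_re]

lemma reP_zero : reP (0 : MvPolynomial (Fin n ⊕ Fin n) ℂ) = 0 := by
  apply MvPolynomial.ext
  intro t
  rw [coeff_reP, coeff_zero, coeff_zero, Complex.zero_re]

lemma reP_sum {α : Type*} (s : Finset α) (f : α → MvPolynomial (Fin n ⊕ Fin n) ℂ) :
    reP (∑ a ∈ s, f a) = ∑ a ∈ s, reP (f a) := by
  classical
  induction s using Finset.cons_induction with
  | empty => simp [reP_zero]
  | cons a s ha ih => rw [Finset.sum_cons, Finset.sum_cons, reP_add, ih]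

lemma reP_map (p : MvPolynomial (Fin n ⊕ Fin n) ℝ) :
    reP (map (algebraMap ℝ ℂ) p) = p := by
  apply MvPolynomial.ext
  intro t
  rw [coeff_reP, coeff_map]
  simp

lemma reP_smul_map (c : ℂ) (p : MvPolynomial (Fin n ⊕ Fin n) ℝ) :
    reP (c • map (algebraMap ℝ ℂ) p) = c.re • p := by
  apply MvPolynomial.ext
  intro t
  rw [coeff_reP, coeff_smul, coeff_smul, coeff_map]
  simp [Complex.mul_re]

end Stmt5Aux

open Stmt5Aux

theorem stmt5 {n : ℕ} (ν : Fin n → ℝ) (hν : ∀ j, ν j ≠ 0)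
    (hindep : ∀ γ : Fin n → ℤ, (∑ j, (γ j : ℝ) * ν j) = 0 → ∀ j, γ j = 0) :
    LinearMap.ker (Dlin ν) = Submodule.span ℝ
      {p : MvPolynomial (Fin n ⊕ Fin n) ℝ |
        ∃ m : Fin n → ℕ, p = ∏ j : Fin n, (X (Sum.inr j) ^ 2 + X (Sum.inl j) ^ 2) ^ m j} ∧
    ∀ (k : ℕ), Odd k → ∀ p : MvPolynomial (Fin n ⊕ Fin n) ℝ,
      p.IsHomogeneous k → Dlin ν p = 0 → p = 0 := by
  classical
  set Pset : Set (MvPolynomial (Fin n ⊕ Fin n) ℝ) :=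
    {p : MvPolynomial (Fin n ⊕ Fin n) ℝ |
      ∃ m : Fin n → ℕ, p = ∏ j : Fin n, (X (Sum.inr j) ^ 2 + X (Sum.inl j) ^ 2) ^ m j}
    with hPset
  have hPm_mem : ∀ m : Fin n → ℕ, Pm m ∈ Pset := fun m => ⟨m, rfl⟩
  -- forward inclusion
  have hker_sub : ∀ p : MvPolynomial (Fin n ⊕ Fin n) ℝ, Dlin ν p = 0 →
      p ∈ Submodule.span ℝ Pset := by
    intro p hp
    set q := map (algebraMap ℝ ℂ) p with hq
    have h1 : DC ν q = 0 := by rw [← mapC_Dlin, hp, map_zero]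
    set w := Smap n q with hwdef
    have hw : Tmap n w = q := Tmap_Smap q
    have hEw : EC ν w = 0 := by
      apply Tmap_injective
      rw [← DC_Tmap, hw, h1, map_zero]
    have hq_sum : q = ∑ s ∈ w.support, coeff s w • Tmap n (monomial s 1) := by
      conv_lhs => rw [← hw, w.as_sum]
      rw [map_sum]
      refine Finset.sum_congr rfl fun s _ => ?_
      rw [← map_smul]
      congr 1
      rw [smul_monomial, smul_eq_mul, mul_one]
    have hwspan : ∀ c : ℂ, reP (c • q) ∈ Submodule.span ℝ Pset := by
      intro c
      rw [hq_sum, Finset.smul_sum, reP_sum]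
      apply Submodule.sum_mem
      intro s hs
      rw [smul_smul,
        Tmap_monomial_balanced s (fun j => EC_ker_balanced ν hindep w hEw s hs j),
        reP_smul_map]
      exact Submodule.smul_mem _ _ (Submodule.subset_span (hPm_mem _))
    have := hwspan 1
    rw [one_smul, hq, reP_map] at this
    exact this
  have hspan_ker : Submodule.span ℝ Pset ≤ LinearMap.ker (Dlin ν) := by
    rw [Submodule.span_le]
    rintro x ⟨m, rfl⟩
    exact LinearMap.mem_ker.mpr (Dlin_Pm ν m)
  constructor
  · exact le_antisymm (fun p hp => hker_sub p (LinearMap.mem_ker.mp hp)) hspan_ker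
  · intro k hk p hpk hp0
    have hsp := hker_sub p hp0
    have hPhom : ∀ m : Fin n → ℕ,
        (Pm m : MvPolynomial (Fin n ⊕ Fin n) ℝ) ∈
          homogeneousSubmodule (Fin n ⊕ Fin n) ℝ (∑ j, 2 * m j) := by
      intro m
      rw [mem_homogeneousSubmodule]
      apply IsHomogeneous.prod
      intro j _
      have hX2 : ((X (Sum.inr j) ^ 2 + X (Sum.inl j) ^ 2 :
          MvPolynomial (Fin n ⊕ Fin n) ℝ)).IsHomogeneous 2 := by
        have h1 : ((X (Sum.inr j) : MvPolynomial (Fin n ⊕ Fin n) ℝ) ^ 2).IsHomogeneous 2 := by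
          simpa using (isHomogeneous_X ℝ (Sum.inr j : Fin n ⊕ Fin n)).pow 2
        have h2 : ((X (Sum.inl j) : MvPolynomial (Fin n ⊕ Fin n) ℝ) ^ 2).IsHomogeneous 2 := by
          simpa using (isHomogeneous_X ℝ (Sum.inl j : Fin n ⊕ Fin n)).pow 2
        exact h1.add h2
      simpa using hX2.pow (m j)
    have hcomp : ∀ x ∈ Submodule.span ℝ Pset, homogeneousComponent k x = 0 := by
      intro x hx
      induction hx using Submodule.span_induction with
      | mem x hxm =>
        obtain ⟨m, rfl⟩ := hxm
        have hxm' := hPhom m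
        rw [show (∏ j : Fin n, (X (Sum.inr j) ^ 2 + X (Sum.inl j) ^ 2) ^ m j :
            MvPolynomial (Fin n ⊕ Fin n) ℝ) = Pm m from rfl]
        rw [homogeneousComponent_of_mem (hPhom m)]
        have hne : k ≠ ∑ j, 2 * m j := by
          obtain ⟨t, rfl⟩ := hk
          have : ∑ j, 2 * m j = 2 * ∑ j, m j := by rw [Finset.mul_sum]
          omega
        rw [if_neg hne]
      | zero => rw [map_zero]
      | add x y _ _ hx hy => rw [map_add, hx, hy, add_zero]
      | smul c x _ hx => rw [map_smul, hx, smul_zero]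
    have hp' : homogeneousComponent k p = p := by
      rw [homogeneousComponent_of_mem ((mem_homogeneousSubmodule _ _).mpr hpk), if_pos rfl]
    rw [← hp', hcomp p hsp]
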